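/- For every β ∈ (0, 1): (i) there is a unique nonnegative vector ψ* ∈ ℝᵏ with ψ*_{I*} = β and ψ*₁ + ⋯ + ψ*ₖ = 1 such that C_i(β, ψ*_i) = C_j(β, ψ*_j) for all i, j ≠ I*; and (ii) this ψ* is the unique maximizer of min_{i ≠ I*} C_i(β, ψ_i) over all nonnegative vectors ψ ∈ ℝᵏ with ψ_{I*} = β and ψ₁ + ⋯ + ψₖ = 1, so that min_{i ≠ I*} C_i(β, ψ*_i) = Γ*_β. -/

import Mathlib

/-- Kullback–Leibler divergence in a one-dimensional exponential family with
log-partition function `A`: `d(θ, x) = (θ - x)·A'(θ) - A(θ) + A(x)`. -/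
noncomputable def dKL (A : ℝ → ℝ) (θ x : ℝ) : ℝ := (θ - x) * deriv A θ - A θ + A x

/-- `C(β, ψ) = inf_{x ∈ ℝ} β·d(θ₁, x) + ψ·d(θ₂, x)`.  With `θ₁ = θ*_{I*}` and
`θ₂ = θ*_i`, this is the quantity `C_i(β, ψ)`. -/
noncomputable def Cfun (A : ℝ → ℝ) (θ₁ θ₂ β ψ : ℝ) : ℝ :=
  ⨅ x : ℝ, (β * dKL A θ₁ x + ψ * dKL A θ₂ x)

/-- `Γ*_β`: the supremum, over nonnegative vectors `ψ` with `ψ_{I*} = β` and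
`Σ ψ_i = 1`, of `min_{i ≠ I*} C_i(β, ψ_i)`. -/
noncomputable def Gamma (A : ℝ → ℝ) (k : ℕ) (θs : Fin k → ℝ) (Istar : Fin k) (β : ℝ) : ℝ :=
  sSup ((fun ψ : Fin k → ℝ =>
      ⨅ i : {i : Fin k // i ≠ Istar}, Cfun A (θs Istar) (θs i.1) β (ψ i.1)) ''
    {ψ : Fin k → ℝ | (∀ i, 0 ≤ ψ i) ∧ ψ Istar = β ∧ (∑ i, ψ i) = 1})

/-! For `β > 0` and `θ*_i < θ*_{I*}`, the map `ψ ↦ C_i(β, ψ)` is continuous on `[0, ∞)`, vanishes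
at `0` and is strictly increasing. So `min_{i ≠ I*} C_i(β, ψ_i)` attains its maximum on the compact
constraint set, and a maximiser equalises the `C_i`. Conversely, a feasible `ψ` different from an
equaliser `ψ*` gives some `i ≠ I*` less weight than `ψ*`, hence a strictly smaller minimum; this
yields both uniqueness statements and identifies the optimal value with `Γ*_β`. -/

open Set Filter Topology

section KL

variable {A : ℝ → ℝ}

lemma dKL_self (θ : ℝ) : dKL A θ θ = 0 := by
  simp [dKL]

lemma hasDerivAt_dKL (hA : Differentiable ℝ A) (θ x : ℝ) :
    HasDerivAt (dKL A θ) (deriv A x - deriv A θ) x :=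
  (((((hasDerivAt_id x).const_sub θ).mul_const (deriv A θ)).sub_const (A θ)).add
  (hA x).hasDerivAt).congr_deriv (by ring)

lemma continuous_dKL (hA : Differentiable ℝ A) (θ : ℝ) : Continuous (dKL A θ) :=
  continuous_iff_continuousAt.2 fun x => (hasDerivAt_dKL hA θ x).continuousAt

lemma strictMono_deriv (hA : Differentiable ℝ A) (hconv : StrictConvexOn ℝ univ A) :
    StrictMono (deriv A) := fun a b hab =>
  hconv.strictMonoOn_deriv (fun x _ => hA x) (mem_univ a) (mem_univ b) hab

lemma strictMonoOn_dKL (hA : Differentiable ℝ A) (hconv : StrictConvexOn ℝ univ A) (θ : ℝ) :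
    StrictMonoOn (dKL A θ) (Ici θ) := by
  refine strictMonoOn_of_deriv_pos (convex_Ici θ) (continuous_dKL hA θ).continuousOn
    fun x hx => ?_
  rw [interior_Ici, mem_Ioi] at hx
  rw [(hasDerivAt_dKL hA θ x).deriv, sub_pos]
  exact strictMono_deriv hA hconv hx

lemma strictAntiOn_dKL (hA : Differentiable ℝ A) (hconv : StrictConvexOn ℝ univ A) (θ : ℝ) :
    StrictAntiOn (dKL A θ) (Iic θ) := by
  refine strictAntiOn_of_deriv_neg (convex_Iic θ) (continuous_dKL hA θ).continuousOn
    fun x hx => ?_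
  rw [interior_Iic, mem_Iio] at hx
  rw [(hasDerivAt_dKL hA θ x).deriv, sub_neg]
  exact strictMono_deriv hA hconv hx

lemma dKL_pos (hA : Differentiable ℝ A) (hconv : StrictConvexOn ℝ univ A) {θ x : ℝ}
    (hx : x ≠ θ) : 0 < dKL A θ x := by
  rw [← dKL_self (A := A) θ]
  rcases hx.lt_or_gt with hx | hx
  · exact strictAntiOn_dKL hA hconv θ hx.le self_mem_Iic hx
  · exact strictMonoOn_dKL hA hconv θ self_mem_Ici hx.le hx

lemma dKL_nonneg (hA : Differentiable ℝ A) (hconv : StrictConvexOn ℝ univ A) (θ x : ℝ) :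
    0 ≤ dKL A θ x := by
  rcases eq_or_ne x θ with rfl | hx
  · rw [dKL_self]
  · exact (dKL_pos hA hconv hx).le

end KL

section Cfun

variable {A : ℝ → ℝ} {θ₁ θ₂ β : ℝ}

lemma Cfun_le (hA : Differentiable ℝ A) (hconv : StrictConvexOn ℝ univ A) (hβ : 0 ≤ β)
    {ψ : ℝ} (hψ : 0 ≤ ψ) (x : ℝ) :
    Cfun A θ₁ θ₂ β ψ ≤ β * dKL A θ₁ x + ψ * dKL A θ₂ x := by
  refine ciInf_le ⟨0, ?_⟩ x
  rintro _ ⟨y, rfl⟩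
  have := dKL_nonneg hA hconv θ₁ y
  have := dKL_nonneg hA hconv θ₂ y
  positivity

lemma Cfun_zero (hA : Differentiable ℝ A) (hconv : StrictConvexOn ℝ univ A) (hβ : 0 ≤ β) :
    Cfun A θ₁ θ₂ β 0 = 0 := by
  refine le_antisymm ?_ (le_ciInf fun x => by simpa using mul_nonneg hβ (dKL_nonneg hA hconv θ₁ x))
  simpa [dKL_self] using Cfun_le (θ₁ := θ₁) (θ₂ := θ₂) hA hconv hβ le_rfl θ₁

/-- Outside `[θ₂, θ₁]` both divergences move away from their minima, so the infimum defining
`Cfun` is attained on this compact interval. -/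
lemma exists_mem_Icc_Cfun_eq (hA : Differentiable ℝ A) (hconv : StrictConvexOn ℝ univ A)
    (hβ : 0 ≤ β) {ψ : ℝ} (hψ : 0 ≤ ψ) (hθ : θ₂ ≤ θ₁) :
    ∃ x ∈ Icc θ₂ θ₁, Cfun A θ₁ θ₂ β ψ = β * dKL A θ₁ x + ψ * dKL A θ₂ x := by
  set g : ℝ → ℝ := fun x => β * dKL A θ₁ x + ψ * dKL A θ₂ x
  obtain ⟨x, hx, hmin⟩ := isCompact_Icc.exists_isMinOn (nonempty_Icc.2 hθ)
    (((continuous_dKL hA θ₁).const_smul β).add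
      ((continuous_dKL hA θ₂).const_smul ψ)).continuousOn
  refine ⟨x, hx, (show IsLeast (range g) (g x) from ⟨⟨x, rfl⟩, ?_⟩).isGLB.ciInf_eq⟩
  rintro _ ⟨y, rfl⟩
  rcases le_or_gt y θ₂ with hy | hy
  · refine (hmin (left_mem_Icc.2 hθ)).trans ?_
    have h₁ := (strictAntiOn_dKL hA hconv θ₁).antitoneOn (hy.trans hθ) hθ hy
    have h₂ := (strictAntiOn_dKL hA hconv θ₂).antitoneOn hy self_mem_Iic hy
    exact add_le_add (mul_le_mul_of_nonneg_left h₁ hβ) (mul_le_mul_of_nonneg_left h₂ hψ)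
  rcases le_or_gt θ₁ y with hy' | hy'
  · refine (hmin (right_mem_Icc.2 hθ)).trans ?_
    have h₁ := (strictMonoOn_dKL hA hconv θ₁).monotoneOn self_mem_Ici hy' hy'
    have h₂ := (strictMonoOn_dKL hA hconv θ₂).monotoneOn hθ (hθ.trans hy') hy'
    exact add_le_add (mul_le_mul_of_nonneg_left h₁ hβ) (mul_le_mul_of_nonneg_left h₂ hψ)
  · exact hmin ⟨hy.le, hy'.le⟩

lemma Cfun_le_add_mul (hA : Differentiable ℝ A) (hconv : StrictConvexOn ℝ univ A)
    (hβ : 0 ≤ β) (hθ : θ₂ ≤ θ₁) {a b : ℝ} (ha : 0 ≤ a) (hb : 0 ≤ b) :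
    Cfun A θ₁ θ₂ β b ≤ Cfun A θ₁ θ₂ β a + dKL A θ₂ θ₁ * dist b a := by
  obtain ⟨x, hx, hxa⟩ := exists_mem_Icc_Cfun_eq hA hconv hβ ha hθ
  have hdx : dKL A θ₂ x ≤ dKL A θ₂ θ₁ :=
    (strictMonoOn_dKL hA hconv θ₂).monotoneOn hx.1 hθ hx.2
  have hba : b - a ≤ dist b a := Real.sub_le_dist b a
  have := dKL_nonneg hA hconv θ₂ x
  calc Cfun A θ₁ θ₂ β b ≤ β * dKL A θ₁ x + b * dKL A θ₂ x := Cfun_le hA hconv hβ hb x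
    _ = Cfun A θ₁ θ₂ β a + (b - a) * dKL A θ₂ x := by rw [hxa]; ring
    _ ≤ Cfun A θ₁ θ₂ β a + dKL A θ₂ θ₁ * dist b a := by
      nlinarith [mul_le_mul_of_nonneg_right hba this,
        mul_le_mul_of_nonneg_left hdx (dist_nonneg (x := b) (y := a))]

lemma continuousOn_Cfun (hA : Differentiable ℝ A) (hconv : StrictConvexOn ℝ univ A)
    (hβ : 0 ≤ β) (hθ : θ₂ ≤ θ₁) : ContinuousOn (Cfun A θ₁ θ₂ β) (Ici 0) :=
  (LipschitzOnWith.of_le_add_mul' _ fun _ hb _ ha =>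
    Cfun_le_add_mul hA hconv hβ hθ ha hb).continuousOn

/-- The minimiser for the weight `b` is not `θ₂`, since the derivative of the objective there is
`β (A'(θ₂) - A'(θ₁)) < 0`; so lowering the weight from `b` to `a` strictly lowers the objective. -/
lemma strictMonoOn_Cfun (hA : Differentiable ℝ A) (hconv : StrictConvexOn ℝ univ A)
    (hβ : 0 < β) (hθ : θ₂ < θ₁) : StrictMonoOn (Cfun A θ₁ θ₂ β) (Ici 0) := by
  intro a ha b hb hab
  obtain ⟨x, -, hxb⟩ := exists_mem_Icc_Cfun_eq hA hconv hβ.le hb hθ.le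
  have hx : x ≠ θ₂ := by
    intro hx
    rw [hx] at hxb
    have hmin : IsMinOn (fun y => β * dKL A θ₁ y + b * dKL A θ₂ y) univ θ₂ :=
      isMinOn_univ_iff.2 fun y => hxb ▸ Cfun_le hA hconv hβ.le hb y
    have hderiv := (((hasDerivAt_dKL hA θ₁ θ₂).const_mul β).add
      ((hasDerivAt_dKL hA θ₂ θ₂).const_mul b))
    have := (hmin.isLocalMin univ_mem).hasDerivAt_eq_zero hderiv
    have := strictMono_deriv hA hconv hθ
    nlinarith
  have := dKL_pos hA hconv hx
  calc Cfun A θ₁ θ₂ β a ≤ β * dKL A θ₁ x + a * dKL A θ₂ x := Cfun_le hA hconv hβ.le ha x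
    _ < β * dKL A θ₁ x + b * dKL A θ₂ x := by gcongr
    _ = Cfun A θ₁ θ₂ β b := hxb.symm

end Cfun

section Allocation

variable {ι : Type*} [Fintype ι] {f : ι → ℝ → ℝ}

/-- Shifting a little mass from `j` to every index attaining the minimum raises all minimal values,
while by continuity `f j` stays above the old minimum. -/
lemma exists_iInf_lt_iInf_of_iInf_lt (hmono : ∀ i, StrictMonoOn (f i) (Ici 0))
    (hcont : ∀ i, ContinuousOn (f i) (Ici 0)) (hzero : ∀ i, f i 0 = 0)
    {ψ : ι → ℝ} (hψ : ∀ i, 0 ≤ ψ i) {j : ι} (hj : ⨅ i, f i (ψ i) < f j (ψ j)) :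
    ∃ ψ' : ι → ℝ, (∀ i, 0 ≤ ψ' i) ∧ ∑ i, ψ' i = ∑ i, ψ i ∧
      ⨅ i, f i (ψ i) < ⨅ i, f i (ψ' i) := by
  classical
  have : Nonempty ι := ⟨j⟩
  set m := ⨅ i, f i (ψ i)
  set T := Finset.univ.filter fun i => f i (ψ i) = m
  have hjT : j ∉ T := by simp [T, hj.ne']
  have hm_lt : ∀ i ∉ T, m < f i (ψ i) := fun i hi =>
    (ciInf_le (Finite.bddBelow_range _) i).lt_of_ne fun h =>
      hi (Finset.mem_filter.2 ⟨Finset.mem_univ i, h.symm⟩)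
  have hψj : 0 < ψ j := by
    refine (hψ j).lt_of_ne fun h => hj.not_ge ?_
    rw [← h, hzero]
    exact le_ciInf fun i => hzero i ▸ (hmono i).monotoneOn self_mem_Ici (hψ i) (hψ i)
  have hdonor : ∀ᶠ δ in 𝓝 (0 : ℝ), 0 < ψ j - T.card * δ ∧ m < f j (ψ j - T.card * δ) := by
    have hlin : Tendsto (fun δ : ℝ => ψ j - T.card * δ) (𝓝 0) (𝓝 (ψ j)) := by
      simpa using (tendsto_const_nhds.sub (tendsto_id.const_mul (T.card : ℝ)) :
        Tendsto (fun δ : ℝ => ψ j - T.card * δ) (𝓝 0) (𝓝 (ψ j - T.card * 0)))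
    exact (hlin.eventually_const_lt hψj).and
      ((((hcont j).continuousAt (Ici_mem_nhds hψj)).tendsto.comp hlin).eventually_const_lt hj)
  have hsmall : ∀ᶠ δ in 𝓝[>] (0 : ℝ),
      (0 < ψ j - T.card * δ ∧ m < f j (ψ j - T.card * δ)) ∧ 0 < δ :=
    (hdonor.filter_mono nhdsWithin_le_nhds).and self_mem_nhdsWithin
  obtain ⟨δ, ⟨hδj, hδf⟩, hδ⟩ := hsmall.exists
  refine ⟨fun i => ψ i + (if i ∈ T then δ else 0) - (if i = j then T.card * δ else 0),
    fun i => ?_, ?_, ?_⟩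
  · by_cases hij : i = j
    · subst hij; simpa [hjT] using hδj.le
    · simp only [hij, if_false, sub_zero]
      split_ifs <;> linarith [hψ i]
  · simp [Finset.sum_add_distrib, Finset.sum_sub_distrib, Finset.sum_ite_mem, Finset.sum_ite_eq']
  · obtain ⟨i, hi⟩ := exists_eq_ciInf_of_finite
      (f := fun i => f i (ψ i + (if i ∈ T then δ else 0) - (if i = j then T.card * δ else 0)))
    rw [← hi]
    by_cases hiT : i ∈ T
    · have hij : i ≠ j := fun h => hjT (h ▸ hiT)
      simp only [hiT, hij, if_true, if_false, sub_zero]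
      have : f i (ψ i) = m := (Finset.mem_filter.1 hiT).2
      exact this ▸ hmono i (hψ i) (mem_Ici.2 (by linarith [hψ i])) (by linarith)
    · by_cases hij : i = j
      · subst hij; simpa [hiT] using hδf
      · simpa [hiT, hij] using hm_lt i hiT

lemma exists_nonneg_sum_eq_forall_apply_eq [Nonempty ι] (hmono : ∀ i, StrictMonoOn (f i) (Ici 0))
    (hcont : ∀ i, ContinuousOn (f i) (Ici 0)) (hzero : ∀ i, f i 0 = 0) {s : ℝ} (hs : 0 ≤ s) :
    ∃ φ : ι → ℝ, (∀ i, 0 ≤ φ i) ∧ ∑ i, φ i = s ∧ ∀ i j, f i (φ i) = f j (φ j) := by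
  set K := {ψ : ι → ℝ | (∀ i, 0 ≤ ψ i) ∧ ∑ i, ψ i = s}
  have hK : IsCompact K := by
    refine isCompact_Icc.of_isClosed_subset ((isClosed_Ici (a := (0 : ι → ℝ))).inter
      (isClosed_eq (continuous_finsetSum _ fun i _ => continuous_apply i) continuous_const))
      (fun ψ hψ => ⟨hψ.1, fun i => ?_⟩ : K ⊆ Icc 0 fun _ => s)
    exact hψ.2 ▸ Finset.single_le_sum (fun j _ => hψ.1 j) (Finset.mem_univ i)
  have hKne : K.Nonempty :=
    ⟨fun _ => s / Fintype.card ι, fun _ => by positivity, by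
      rw [Finset.sum_const, Finset.card_univ, nsmul_eq_mul, mul_div_cancel₀ _ (by simp)]⟩
  have hG : ContinuousOn (fun ψ : ι → ℝ => ⨅ i, f i (ψ i)) K := by
    simp_rw [← Finset.inf'_univ_eq_ciInf]
    exact ContinuousOn.finset_inf'_apply _ fun i _ =>
      (hcont i).comp (continuous_apply i).continuousOn fun ψ hψ => hψ.1 i
  obtain ⟨φ, hφK, hmax⟩ := hK.exists_isMaxOn hKne hG
  have hφ : ∀ j, f j (φ j) = ⨅ i, f i (φ i) := by
    intro j
    refine le_antisymm ?_ (ciInf_le (Finite.bddBelow_range _) j)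
    by_contra! hj
    obtain ⟨ψ, hψ0, hψsum, hlt⟩ := exists_iInf_lt_iInf_of_iInf_lt hmono hcont hzero hφK.1 hj
    exact (hmax ⟨hψ0, hψsum.trans hφK.2⟩).not_gt hlt
  exact ⟨φ, hφK.1, hφK.2, fun i j => (hφ i).trans (hφ j).symm⟩

end Allocation

section FixedCoordinate

variable {κ : Type*} [Fintype κ] {i₀ : κ} {f : κ → ℝ → ℝ}

lemma exists_forall_ne_apply_eq [Nonempty {i // i ≠ i₀}]
    (hmono : ∀ i ≠ i₀, StrictMonoOn (f i) (Ici 0)) (hcont : ∀ i ≠ i₀, ContinuousOn (f i) (Ici 0))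
    (hzero : ∀ i ≠ i₀, f i 0 = 0) {β : ℝ} (hβ₀ : 0 ≤ β) (hβ₁ : β ≤ 1) :
    ∃ φ : κ → ℝ, ((∀ i, 0 ≤ φ i) ∧ φ i₀ = β ∧ ∑ i, φ i = 1) ∧
      ∀ i j, i ≠ i₀ → j ≠ i₀ → f i (φ i) = f j (φ j) := by
  classical
  obtain ⟨φ, hφ₀, hφsum, hφeq⟩ := exists_nonneg_sum_eq_forall_apply_eq
    (f := fun i : {i // i ≠ i₀} => f i) (fun i => hmono i i.2) (fun i => hcont i i.2)
    (fun i => hzero i i.2) (sub_nonneg.2 hβ₁)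
  refine ⟨fun i => if h : i = i₀ then β else φ ⟨i, h⟩, ⟨fun i => ?_, dif_pos rfl, ?_⟩,
    fun i j hi hj => by simpa [hi, hj] using hφeq ⟨i, hi⟩ ⟨j, hj⟩⟩
  · dsimp only
    split_ifs
    exacts [hβ₀, hφ₀ _]
  · have hφ : ∀ i : {i // i ≠ i₀}, (if h : (i : κ) = i₀ then β else φ ⟨i, h⟩) = φ i :=
      fun i => dif_neg i.2
    rw [Fintype.sum_eq_add_sum_subtype_ne _ i₀]
    simp only [dif_pos, hφ, hφsum]
    ring

lemma iInf_lt_iInf_of_forall_ne_apply_eq (hmono : ∀ i ≠ i₀, StrictMonoOn (f i) (Ici 0))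
    {ψ φ : κ → ℝ} (hψ : ∀ i, 0 ≤ ψ i) (hφ : ∀ i, 0 ≤ φ i) (h₀ : ψ i₀ = φ i₀)
    (hsum : ∑ i, ψ i = ∑ i, φ i) (hne : ψ ≠ φ)
    (heq : ∀ i j, i ≠ i₀ → j ≠ i₀ → f i (φ i) = f j (φ j)) :
    ⨅ i : {i // i ≠ i₀}, f i (ψ i) < ⨅ i : {i // i ≠ i₀}, f i (φ i) := by
  obtain ⟨i, hi⟩ : ∃ i, ψ i < φ i := by
    by_contra! h
    exact hne (funext fun i =>
      ((Finset.sum_eq_sum_iff_of_le fun i _ => h i).1 hsum.symm i (Finset.mem_univ i)).symm)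
  have hi₀ : i ≠ i₀ := fun h => hi.ne (h ▸ h₀)
  have : Nonempty {i // i ≠ i₀} := ⟨⟨i, hi₀⟩⟩
  calc ⨅ l : {i // i ≠ i₀}, f l (ψ l) ≤ f i (ψ i) :=
        ciInf_le (Finite.bddBelow_range _) (⟨i, hi₀⟩ : {i // i ≠ i₀})
    _ < f i (φ i) := hmono i hi₀ (hψ i) (hφ i) hi
    _ = ⨅ l : {i // i ≠ i₀}, f l (φ l) := by
      rw [iInf_congr fun l : {i // i ≠ i₀} => heq l i l.2 hi₀, ciInf_const]

end FixedCoordinate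

theorem stmt_6_general (A : ℝ → ℝ) (hA : Differentiable ℝ A)
    (hconv : StrictConvexOn ℝ (Set.univ : Set ℝ) A)
    (k : ℕ) (hk : 2 ≤ k)
    (θs : Fin k → ℝ)
    (Istar : Fin k) (hIstar : ∀ j, j ≠ Istar → θs j < θs Istar)
    (β : ℝ) (hβ : β ∈ Set.Ioo (0:ℝ) 1) :
    ∃ ψstar : Fin k → ℝ,
      ((∀ i, 0 ≤ ψstar i) ∧ ψstar Istar = β ∧ (∑ i, ψstar i) = 1 ∧
        (∀ i j, i ≠ Istar → j ≠ Istar →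
          Cfun A (θs Istar) (θs i) β (ψstar i) = Cfun A (θs Istar) (θs j) β (ψstar j))) ∧
      (∀ ψ : Fin k → ℝ, (∀ i, 0 ≤ ψ i) → ψ Istar = β → (∑ i, ψ i) = 1 →
        (∀ i j, i ≠ Istar → j ≠ Istar →
          Cfun A (θs Istar) (θs i) β (ψ i) = Cfun A (θs Istar) (θs j) β (ψ j)) →
        ψ = ψstar) ∧
      (∀ ψ : Fin k → ℝ, (∀ i, 0 ≤ ψ i) → ψ Istar = β → (∑ i, ψ i) = 1 → ψ ≠ ψstar →
        (⨅ i : {i : Fin k // i ≠ Istar}, Cfun A (θs Istar) (θs i.1) β (ψ i.1)) <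
          (⨅ i : {i : Fin k // i ≠ Istar}, Cfun A (θs Istar) (θs i.1) β (ψstar i.1))) ∧
      (⨅ i : {i : Fin k // i ≠ Istar}, Cfun A (θs Istar) (θs i.1) β (ψstar i.1)) =
        Gamma A k θs Istar β := by
  obtain ⟨hβ₀, hβ₁⟩ := hβ
  have : Nontrivial (Fin k) := Fin.nontrivial_iff_two_le.2 hk
  have : Nonempty {i // i ≠ Istar} := nonempty_subtype.2 (exists_ne Istar)
  have hmono : ∀ i ≠ Istar, StrictMonoOn (Cfun A (θs Istar) (θs i) β) (Ici 0) := fun i hi =>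
    strictMonoOn_Cfun hA hconv hβ₀ (hIstar i hi)
  obtain ⟨ψs, ⟨hψs₀, hψsI, hψs₁⟩, hψseq⟩ := exists_forall_ne_apply_eq hmono
    (fun i hi => continuousOn_Cfun hA hconv hβ₀.le (hIstar i hi).le)
    (fun _ _ => Cfun_zero hA hconv hβ₀.le) hβ₀.le hβ₁.le
  have hopt : ∀ ψ : Fin k → ℝ, (∀ i, 0 ≤ ψ i) → ψ Istar = β → ∑ i, ψ i = 1 → ψ ≠ ψs →
      ⨅ i : {i // i ≠ Istar}, Cfun A (θs Istar) (θs i.1) β (ψ i.1) <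
        ⨅ i : {i // i ≠ Istar}, Cfun A (θs Istar) (θs i.1) β (ψs i.1) :=
    fun ψ hψ₀ hψI hψ₁ hne => iInf_lt_iInf_of_forall_ne_apply_eq hmono hψ₀ hψs₀
      (hψI.trans hψsI.symm) (hψ₁.trans hψs₁.symm) hne hψseq
  refine ⟨ψs, ⟨hψs₀, hψsI, hψs₁, hψseq⟩, fun ψ hψ₀ hψI hψ₁ hψeq => ?_, hopt, ?_⟩
  · by_contra hne
    exact (hopt ψ hψ₀ hψI hψ₁ hne).not_gt (iInf_lt_iInf_of_forall_ne_apply_eq hmono hψs₀ hψ₀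
      (hψsI.trans hψI.symm) (hψs₁.trans hψ₁.symm) (Ne.symm hne) hψeq)
  · rw [Gamma]
    refine (IsGreatest.csSup_eq ?_).symm
    refine ⟨⟨ψs, ⟨hψs₀, hψsI, hψs₁⟩, rfl⟩, ?_⟩
    rintro _ ⟨ψ, ⟨hψ₀, hψI, hψ₁⟩, rfl⟩
    rcases eq_or_ne ψ ψs with rfl | hne
    exacts [le_rfl, (hopt ψ hψ₀ hψI hψ₁ hne).le]

/-- For every `β ∈ (0,1)`: (i) there is a unique nonnegative `ψ*` with
`ψ*_{I*} = β`, `Σ ψ*_i = 1` and `C_i(β, ψ*_i) = C_j(β, ψ*_j)` for all `i, j ≠ I*`;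
(ii) this `ψ*` is the unique maximizer of `min_{i ≠ I*} C_i(β, ψ_i)` over the
constraint set, and the optimal value is `Γ*_β`. -/
theorem stmt_6 (A : ℝ → ℝ) (hA : Differentiable ℝ A)
    (hconv : StrictConvexOn ℝ (Set.univ : Set ℝ) A)
    (lo hi : ℝ) (hlh : lo < hi) (k : ℕ) (hk : 2 ≤ k)
    (θs : Fin k → ℝ) (hθs : ∀ j, θs j ∈ Set.Ioo lo hi)
    (Istar : Fin k) (hIstar : ∀ j, j ≠ Istar → θs j < θs Istar)
    (β : ℝ) (hβ : β ∈ Set.Ioo (0:ℝ) 1) :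
    ∃ ψstar : Fin k → ℝ,
      ((∀ i, 0 ≤ ψstar i) ∧ ψstar Istar = β ∧ (∑ i, ψstar i) = 1 ∧
        (∀ i j, i ≠ Istar → j ≠ Istar →
          Cfun A (θs Istar) (θs i) β (ψstar i) = Cfun A (θs Istar) (θs j) β (ψstar j))) ∧
      (∀ ψ : Fin k → ℝ, (∀ i, 0 ≤ ψ i) → ψ Istar = β → (∑ i, ψ i) = 1 →
        (∀ i j, i ≠ Istar → j ≠ Istar →
          Cfun A (θs Istar) (θs i) β (ψ i) = Cfun A (θs Istar) (θs j) β (ψ j)) →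
        ψ = ψstar) ∧
      (∀ ψ : Fin k → ℝ, (∀ i, 0 ≤ ψ i) → ψ Istar = β → (∑ i, ψ i) = 1 → ψ ≠ ψstar →
        (⨅ i : {i : Fin k // i ≠ Istar}, Cfun A (θs Istar) (θs i.1) β (ψ i.1)) <
          (⨅ i : {i : Fin k // i ≠ Istar}, Cfun A (θs Istar) (θs i.1) β (ψstar i.1))) ∧
      (⨅ i : {i : Fin k // i ≠ Istar}, Cfun A (θs Istar) (θs i.1) β (ψstar i.1)) =
        Gamma A k θs Istar β :=
  stmt_6_general A hA hconv k hk θs Istar hIstar β hβ
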